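/- arXiv:0712.3131 — 2 statements merged into one kernel-verified Lean document; each statement's English description precedes it below -/
import Mathlib

section
/- Let λ ∈ P∨, w ∈ W, i = i(λ) the minuscule index with λ + ϖ_{i}∨ ∈ Q∨, u = v_{f(i)} w and μ = λ − w⁻¹(ϖ_{f(i)}∨). Then for every positive root α of the finite root system, χ(w(α) < 0) + ⟨λ, α⟩ = χ(u(α) < 0) + ⟨μ, α⟩, where χ(A) = 1 if A holds and 0 otherwise. -/
open scoped Classical

/-- The multiplicative group structure that `AddAut M` carried in older Mathlib. -/
instance AddAut.groupOfOldMathlib (M : Type*) [Add M] : Group (AddAut M) where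
  mul g h := AddEquiv.trans h g
  one := AddEquiv.refl _
  inv := AddEquiv.symm
  mul_assoc _ _ _ := rfl
  one_mul _ := rfl
  mul_one _ := rfl
  inv_mul_cancel := AddEquiv.self_trans_symm

/-!
Write `b = w(α)` and `v = w₀^{P}` for the parabolic `P = P_{f(i)}`. Since `u(α) = w₀(v(b))` and
`w₀` swaps positive and negative roots, `χ(u(α) < 0) = χ(v(b) > 0)`, while
`⟨w⁻¹ ϖ_{f(i)}∨, α⟩ = ⟨ϖ_{f(i)}∨, b⟩`. The identity thus reduces to
`χ(v(b) > 0) = χ(b < 0) + ⟨ϖ_{f(i)}∨, b⟩`, which follows by checking the four cases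
`±b > 0`, `⟨ϖ_{f(i)}∨, ±b⟩ ∈ {0, 1}` allowed by minusculity against the fact that `v` keeps
exactly the positive roots with `⟨ϖ_{f(i)}∨, β⟩ ≠ 0` positive.
-/

section PositiveSystem

variable {QL : Type*} [AddCommGroup QL] {R : Set QL} {pos : QL → Prop}

theorem not_pos_iff_pos_neg (hRneg : ∀ a ∈ R, -a ∈ R) (hsplit : ∀ a ∈ R, pos a ↔ ¬ pos (-a))
    {a : QL} (ha : a ∈ R) : ¬ pos a ↔ pos (-a) := by
  rw [hsplit (-a) (hRneg a ha), neg_neg]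

theorem not_pos_apply_iff_of_reverses_pos (hRneg : ∀ a ∈ R, -a ∈ R)
    (hsplit : ∀ a ∈ R, pos a ↔ ¬ pos (-a)) {v : AddAut QL} (hvR : ∀ a ∈ R, v a ∈ R)
    (hv : ∀ a ∈ R, pos a → ¬ pos (v a)) {c : QL} (hc : c ∈ R) : ¬ pos (v c) ↔ pos c := by
  refine ⟨fun hvc => ?_, hv c hc⟩
  by_contra hnc
  have hneg := hv (-c) (hRneg c hc) ((not_pos_iff_pos_neg hRneg hsplit hc).mp hnc)
  rw [map_neg, ← not_pos_iff_pos_neg hRneg hsplit (hvR c hc)] at hneg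
  exact hneg hvc

theorem ite_pos_apply_eq_ite_not_pos_add (hRneg : ∀ a ∈ R, -a ∈ R)
    (hsplit : ∀ a ∈ R, pos a ↔ ¬ pos (-a)) (φ : QL →+ ℤ)
    (hφ : ∀ a ∈ R, pos a → φ a = 0 ∨ φ a = 1) {v : AddAut QL} (hvR : ∀ a ∈ R, v a ∈ R)
    (hv₀ : ∀ a ∈ R, pos a → φ a = 0 → ¬ pos (v a))
    (hv₁ : ∀ a ∈ R, pos a → φ a ≠ 0 → pos (v a)) {b : QL} (hb : b ∈ R) :
    (if pos (v b) then (1 : ℤ) else 0) = (if ¬ pos b then (1 : ℤ) else 0) + φ b := by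
  have hvb := not_pos_iff_pos_neg hRneg hsplit (hvR b hb)
  by_cases hpb : pos b
  · rw [if_neg (not_not_intro hpb)]
    rcases hφ b hb hpb with h | h
    · rw [if_neg (hv₀ b hb hpb h)]
      omega
    · rw [if_pos (hv₁ b hb hpb (by omega))]
      omega
  · rw [if_pos hpb]
    have hnb : -b ∈ R := hRneg b hb
    have hpnb : pos (-b) := (not_pos_iff_pos_neg hRneg hsplit hb).mp hpb
    have hφneg : φ (-b) = -φ b := map_neg φ b
    rcases hφ (-b) hnb hpnb with h | h
    · have hvnb := hv₀ (-b) hnb hpnb h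
      rw [map_neg, ← hvb, not_not] at hvnb
      rw [if_pos hvnb]
      omega
    · have hvnb := hv₁ (-b) hnb hpnb (by omega)
      rw [map_neg, ← hvb] at hvnb
      rw [if_neg hvnb]
      omega

end PositiveSystem

theorem pair_act_inv_apply {W QL Pv : Type*} [Group W] [AddCommGroup QL] [AddCommGroup Pv]
    (actQ : W →* AddAut QL) (actP : W →* AddAut Pv) (pair : Pv →+ QL →+ ℤ)
    (hequiv : ∀ (w : W) (x : Pv) (a : QL), pair (actP w x) (actQ w a) = pair x a)
    (w : W) (x : Pv) (a : QL) : pair (actP w⁻¹ x) a = pair x (actQ w a) := by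
  have hx : actP w (actP w⁻¹ x) = x := by
    change (actP w * actP w⁻¹) x = x
    rw [← map_mul, mul_inv_cancel, map_one]
    rfl
  rw [← hequiv w, hx]

theorem stmt_7_general
    (W : Type) [Group W] (QL Pv : Type) [AddCommGroup QL] [AddCommGroup Pv]
    (actQ : W →* AddAut QL) (actP : W →* AddAut Pv)
    (pair : Pv →+ QL →+ ℤ)
    (hequiv : ∀ (w : W) (x : Pv) (a : QL), pair (actP w x) (actQ w a) = pair x a)
    (R : Set QL) (pos : QL → Prop)
    (hRW : ∀ (w : W) (a : QL), a ∈ R → actQ w a ∈ R)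
    (hRneg : ∀ a, a ∈ R → -a ∈ R)
    (hsplit : ∀ a ∈ R, pos a ↔ ¬ pos (-a))
    (I : Type)
    (ϖ : I → Pv)
    (w0 : W) (hw0 : ∀ a ∈ R, pos a → ¬ pos (actQ w0 a))
    (f : I → I)
    (w0P : I → W)
    (hw0P1 : ∀ j : I, ∀ a ∈ R, pos a → pair (ϖ j) a = 0 → ¬ pos (actQ (w0P j) a))
    (hw0P2 : ∀ j : I, ∀ a ∈ R, pos a → pair (ϖ j) a ≠ 0 → pos (actQ (w0P j) a))
    (w : W) (lam : Pv) (i : I)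
    (hminf : ∀ a ∈ R, pos a → pair (ϖ (f i)) a = 0 ∨ pair (ϖ (f i)) a = 1) :
    ∀ a ∈ R, pos a →
      ((if ¬ pos (actQ w a) then (1 : ℤ) else 0) + pair lam a)
        = ((if ¬ pos (actQ ((w0 * w0P (f i)) * w) a) then (1 : ℤ) else 0)
            + pair (lam - actP w⁻¹ (ϖ (f i))) a) := by
  intro a ha _
  set v := actQ (w0P (f i))
  have hb : actQ w a ∈ R := hRW w a ha
  have hu : actQ ((w0 * w0P (f i)) * w) a = actQ w0 (v (actQ w a)) := by
    rw [map_mul, map_mul]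
    rfl
  have hw0v : ¬ pos (actQ w0 (v (actQ w a))) ↔ pos (v (actQ w a)) :=
    not_pos_apply_iff_of_reverses_pos hRneg hsplit (hRW w0) hw0 (hRW _ _ hb)
  have hvb := ite_pos_apply_eq_ite_not_pos_add hRneg hsplit (pair (ϖ (f i))) hminf
    (hRW (w0P (f i))) (hw0P1 (f i)) (hw0P2 (f i)) hb
  rw [hu, if_congr hw0v rfl rfl, hvb, map_sub, AddMonoidHom.sub_apply,
    pair_act_inv_apply actQ actP pair hequiv]
  ring

theorem stmt_7
    (W : Type) [Group W] (QL Pv : Type) [AddCommGroup QL] [AddCommGroup Pv]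
    (actQ : W →* AddAut QL) (actP : W →* AddAut Pv)
    (pair : Pv →+ QL →+ ℤ)
    (hequiv : ∀ (w : W) (x : Pv) (a : QL), pair (actP w x) (actQ w a) = pair x a)
    (R : Set QL) (pos : QL → Prop)
    (hRfin : R.Finite)
    (hRW : ∀ (w : W) (a : QL), a ∈ R → actQ w a ∈ R)
    (hRneg : ∀ a, a ∈ R → -a ∈ R)
    (hsplit : ∀ a ∈ R, pos a ↔ ¬ pos (-a))
    (I : Type) [Fintype I] [DecidableEq I] (α : I → QL)
    (hα : ∀ j, α j ∈ R ∧ pos (α j))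
    (hfaith : ∀ u v : W, (∀ a ∈ R, actQ u a = actQ v a) → u = v)
    (ϖ : I → Pv) (hϖ : ∀ i j : I, pair (ϖ i) (α j) = if i = j then 1 else 0)
    (w0 : W) (hw0 : ∀ a ∈ R, pos a → ¬ pos (actQ w0 a))
    (f : I → I) (hf : ∀ j : I, α (f j) = - actQ w0 (α j))
    (w0P : I → W)
    (hw0P1 : ∀ j : I, ∀ a ∈ R, pos a → pair (ϖ j) a = 0 → ¬ pos (actQ (w0P j) a))
    (hw0P2 : ∀ j : I, ∀ a ∈ R, pos a → pair (ϖ j) a ≠ 0 → pos (actQ (w0P j) a))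
    (hw0P3 : ∀ j : I, actP (w0P j) (ϖ j) = ϖ j)
    (hw0ϖ : ∀ j : I, actP w0 (ϖ j) = - ϖ (f j))
    (Qv : AddSubgroup Pv)
    (hQvW : ∀ (u : W) (x : Pv), actP u x - x ∈ Qv)
    (w : W) (lam : Pv) (i : I)
    (hmin : ∀ a ∈ R, pos a → pair (ϖ i) a = 0 ∨ pair (ϖ i) a = 1)
    (hminf : ∀ a ∈ R, pos a → pair (ϖ (f i)) a = 0 ∨ pair (ϖ (f i)) a = 1)
    (hlam : lam + ϖ i ∈ Qv) :
    ∀ a ∈ R, pos a →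
      ((if ¬ pos (actQ w a) then (1 : ℤ) else 0) + pair lam a)
        = ((if ¬ pos (actQ ((w0 * w0P (f i)) * w) a) then (1 : ℤ) else 0)
            + pair (lam - actP w⁻¹ (ϖ (f i))) a) :=
  stmt_7_general W QL Pv actQ actP pair hequiv R pos hRW hRneg hsplit I ϖ w0 hw0 f w0P hw0P1 hw0P2 w
    lam i hminf
end

section
/- An element w t_λ of the extended affine Weyl group, with w ∈ W and λ ∈ P∨, lies in (W̃^P)_aff if and only if for every root α ∈ R_P⁺ one has ⟨λ, α⟩ = 0 when w(α) > 0 and ⟨λ, α⟩ = −1 when w(α) < 0. -/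
/-- Action of the (extended) affine Weyl group element `x = w t_λ` (encoded as the
pair `(w, λ) : W × Pv`) on an affine root `β = (a, n)`, i.e. `a + nδ`:
`w t_λ (a + nδ) = w(a) + (n − ⟨λ, a⟩)δ`. -/
def affAct {W QL Pv : Type} [Group W] [AddCommGroup QL] [AddCommGroup Pv]
    (actQ : W →* Multiplicative (AddAut QL)) (pair : Pv →+ QL →+ ℤ) (x : W × Pv) (β : QL × ℤ) :
    QL × ℤ :=
  (Multiplicative.toAdd (actQ x.1) β.1, β.2 - pair x.2 β.1)

/-- Positivity of a real affine root `a + nδ`. -/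
def affPos {QL : Type} (R : Set QL) (pos : QL → Prop) (β : QL × ℤ) : Prop :=
  β.1 ∈ R ∧ (0 < β.2 ∨ (β.2 = 0 ∧ pos β.1))

/-- Multiplication in the (extended) affine Weyl group `W ⋉ P∨`:
`(w t_λ)(v t_μ) = (wv) t_{v⁻¹(λ) + μ}`. -/
def amul {W Pv : Type} [Group W] [AddCommGroup Pv] (actP : W →* Multiplicative (AddAut Pv))
    (x y : W × Pv) : W × Pv :=
  (x.1 * y.1, Multiplicative.toAdd (actP y.1⁻¹) x.2 + y.2)

/-- Inversion in the (extended) affine Weyl group `W ⋉ P∨`. -/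
def ainv {W Pv : Type} [Group W] [AddCommGroup Pv] (actP : W →* Multiplicative (AddAut Pv))
    (x : W × Pv) : W × Pv :=
  (x.1⁻¹, - Multiplicative.toAdd (actP x.1) x.2)

/-- Length of an element of the (extended) affine Weyl group: the number of
positive real affine roots sent to negative affine roots. -/
noncomputable def alen {W QL Pv : Type} [Group W] [AddCommGroup QL] [AddCommGroup Pv]
    (actQ : W →* Multiplicative (AddAut QL)) (pair : Pv →+ QL →+ ℤ) (R : Set QL) (pos : QL → Prop)
    (x : W × Pv) : ℕ :=
  Set.ncard {β : QL × ℤ | affPos R pos β ∧ ¬ affPos R pos (affAct actQ pair x β)}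

/-! For `a ∈ R`, the positive affine roots `a + nδ` are exactly those with `n ≥ m(a)`, where
`m(a) = minLevel pos a` is `0` if `a > 0` and `1` otherwise. Since `w t_λ` maps `a + nδ` to
`w(a) + (n − ⟨λ, a⟩)δ`, it keeps all of them positive iff `⟨λ, a⟩ ≤ m(a) − m(w a)`. Imposing this
for `a` and `−a`, and using `m(−a) = 1 − m(a)`, forces `⟨λ, a⟩ = m(a) − m(w a)`, which for `a > 0`
is the stated dichotomy. -/

open scoped Classical in
noncomputable def minLevel {QL : Type} (pos : QL → Prop) (a : QL) : ℤ :=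
  if pos a then 0 else 1

section

variable {QL : Type} {R : Set QL} {pos : QL → Prop}

theorem affPos_iff_minLevel_le {a : QL} (ha : a ∈ R) (n : ℤ) :
    affPos R pos (a, n) ↔ minLevel pos a ≤ n := by
  unfold affPos minLevel
  split_ifs with h <;> simp only [ha, h, true_and, and_true, and_false, or_false] <;> omega

theorem forall_affPos_shift_iff {a b : QL} (ha : a ∈ R) (hb : b ∈ R) (k : ℤ) :
    (∀ n, affPos R pos (a, n) → affPos R pos (b, n - k)) ↔ k ≤ minLevel pos a - minLevel pos b := by
  simp only [affPos_iff_minLevel_le ha, affPos_iff_minLevel_le hb]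
  exact ⟨fun h ↦ by linarith [h _ le_rfl], fun h n hn ↦ by linarith⟩

variable [AddCommGroup QL] {f : QL →+ QL} {k : QL →+ ℤ} {RP : Set QL}

theorem minLevel_neg {a : QL} (hsplit : pos a ↔ ¬ pos (-a)) :
    minLevel pos (-a) = 1 - minLevel pos a := by
  unfold minLevel
  split_ifs <;> tauto

theorem minLevel_sub_minLevel_map_neg {a : QL} (ha : pos a ↔ ¬ pos (-a))
    (hfa : pos (f a) ↔ ¬ pos (-f a)) :
    minLevel pos (-a) - minLevel pos (f (-a)) = -(minLevel pos a - minLevel pos (f a)) := by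
  rw [map_neg, minLevel_neg ha, minLevel_neg hfa]
  ring

theorem forall_affPos_map_iff_eq_minLevel_sub (hRPsub : RP ⊆ R) (hRPneg : ∀ a ∈ RP, -a ∈ RP)
    (hfR : ∀ a ∈ R, f a ∈ R) (hsplit : ∀ a ∈ R, pos a ↔ ¬ pos (-a)) :
    (∀ β : QL × ℤ, β.1 ∈ RP → affPos R pos β → affPos R pos (f β.1, β.2 - k β.1)) ↔
      ∀ a ∈ RP, k a = minLevel pos a - minLevel pos (f a) := by
  have hle : ∀ a ∈ RP, (∀ n, affPos R pos (a, n) → affPos R pos (f a, n - k a)) ↔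
      k a ≤ minLevel pos a - minLevel pos (f a) :=
    fun a ha ↦ forall_affPos_shift_iff (hRPsub ha) (hfR a (hRPsub ha)) (k a)
  constructor
  · intro h a ha
    have hRa := hRPsub ha
    have h₁ := (hle a ha).1 fun n ↦ h (a, n) ha
    have h₂ := (hle (-a) (hRPneg a ha)).1 fun n ↦ h (-a, n) (hRPneg a ha)
    rw [map_neg, minLevel_sub_minLevel_map_neg (hsplit a hRa) (hsplit _ (hfR a hRa))] at h₂
    linarith
  · rintro h ⟨a, n⟩ ha
    exact (hle a ha).2 (h a ha).le n

theorem forall_eq_minLevel_sub_iff (hRPsub : RP ⊆ R) (hRPneg : ∀ a ∈ RP, -a ∈ RP)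
    (hfR : ∀ a ∈ R, f a ∈ R) (hsplit : ∀ a ∈ R, pos a ↔ ¬ pos (-a)) :
    (∀ a ∈ RP, k a = minLevel pos a - minLevel pos (f a)) ↔
      ∀ a ∈ RP, pos a → (pos (f a) → k a = 0) ∧ (¬ pos (f a) → k a = -1) := by
  have hpos : ∀ a, pos a → (k a = minLevel pos a - minLevel pos (f a) ↔
      (pos (f a) → k a = 0) ∧ (¬ pos (f a) → k a = -1)) := by
    intro a ha
    by_cases hfa : pos (f a) <;> simp [minLevel, ha, hfa]
  refine ⟨fun h a ha hpa ↦ (hpos a hpa).1 (h a ha), fun h a ha ↦ ?_⟩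
  by_cases hpa : pos a
  · exact (hpos a hpa).2 (h a ha hpa)
  · have hRa := hRPsub ha
    have hna : pos (-a) := not_not.1 (mt (hsplit a hRa).2 hpa)
    have := (hpos (-a) hna).2 (h (-a) (hRPneg a ha) hna)
    rw [map_neg, minLevel_sub_minLevel_map_neg (hsplit a hRa) (hsplit _ (hfR a hRa))] at this
    linarith

end

theorem stmt_9_general
    (W : Type) [Group W] (QL Pv : Type) [AddCommGroup QL] [AddCommGroup Pv]
    (actQ : W →* Multiplicative (AddAut QL))
    (pair : Pv →+ QL →+ ℤ)
    (R : Set QL) (pos : QL → Prop)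
    (hRW : ∀ (w : W) (a : QL), a ∈ R → Multiplicative.toAdd (actQ w a) ∈ R)
    (hsplit : ∀ a ∈ R, pos a ↔ ¬ pos (-a))
    (RP : Set QL) (hRPsub : RP ⊆ R) (hRPneg : ∀ a, a ∈ RP → -a ∈ RP)
    (w : W) (lam : Pv) :
    (∀ β : QL × ℤ, β.1 ∈ RP → affPos R pos β →
        affPos R pos (affAct actQ pair (w, lam) β))
      ↔ (∀ a ∈ RP, pos a →
          (pos (Multiplicative.toAdd (actQ w a)) → pair lam a = 0) ∧
          (¬ pos (Multiplicative.toAdd (actQ w a)) → pair lam a = -1)) :=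
  let f : QL →+ QL := (Multiplicative.toAdd (actQ w)).toAddMonoidHom
  (forall_affPos_map_iff_eq_minLevel_sub (f := f) (k := pair lam) hRPsub hRPneg (hRW w) hsplit).trans
    (forall_eq_minLevel_sub_iff hRPsub hRPneg (hRW w) hsplit)

theorem stmt_9
    (W : Type) [Group W] (QL Pv : Type) [AddCommGroup QL] [AddCommGroup Pv]
    (actQ : W →* Multiplicative (AddAut QL)) (actP : W →* Multiplicative (AddAut Pv))
    (pair : Pv →+ QL →+ ℤ)
    (hequiv : ∀ (w : W) (x : Pv) (a : QL), pair (Multiplicative.toAdd (actP w x)) (Multiplicative.toAdd (actQ w a)) = pair x a)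
    (R : Set QL) (pos : QL → Prop)
    (hRfin : R.Finite)
    (hRW : ∀ (w : W) (a : QL), a ∈ R → Multiplicative.toAdd (actQ w a) ∈ R)
    (hRneg : ∀ a, a ∈ R → -a ∈ R)
    (hsplit : ∀ a ∈ R, pos a ↔ ¬ pos (-a))
    (I : Type) [Fintype I] [DecidableEq I] (α : I → QL)
    (hα : ∀ j, α j ∈ R ∧ pos (α j))
    (hfaith : ∀ u v : W, (∀ a ∈ R, actQ u a = actQ v a) → u = v)
    (RP : Set QL) (hRPsub : RP ⊆ R) (hRPneg : ∀ a, a ∈ RP → -a ∈ RP)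
    (w : W) (lam : Pv) :
    (∀ β : QL × ℤ, β.1 ∈ RP → affPos R pos β →
        affPos R pos (affAct actQ pair (w, lam) β))
      ↔ (∀ a ∈ RP, pos a →
          (pos (Multiplicative.toAdd (actQ w a)) → pair lam a = 0) ∧
          (¬ pos (Multiplicative.toAdd (actQ w a)) → pair lam a = -1)) :=
  stmt_9_general W QL Pv actQ pair R pos hRW hsplit RP hRPsub hRPneg w lam
end
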